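/- arXiv:1104.5195 — 2 statements merged into one kernel-verified Lean document; each statement's English description precedes it below -/
import Mathlib

section
/- Let S_λ be a weighted shift on a directed tree T with weights λ = {λ_v}_{v∈V°} ⊆ ℂ. If D(S_λ) is dense in ℓ²(V) and λ_v ≠ 0 for all v ∈ V°, then V is at most countable. -/
open scoped ENNReal NNReal Classical

noncomputable section

/-- A directed tree: a directed graph with nonempty vertex set in which each vertex has
at most one parent, there are no circuits, and the underlying undirected graph is
connected and has no cycles (i.e. is a tree). -/
structure DirectedTree (V : Type) where
  edge : V → V → Prop
  nonempty : Nonempty V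
  antisymm : ∀ u v : V, edge u v → ¬ edge v u
  parent_unique : ∀ u v w : V, edge u w → edge v w → u = v
  isTree : (SimpleGraph.fromRel edge).IsTree

namespace DirectedTree

variable {V : Type} (T : DirectedTree V)

/-- The set of children of a vertex. -/
def chi (u : V) : Set V := {v | T.edge u v}

/-- `v` has a parent. -/
def HasParent (v : V) : Prop := ∃ u, T.edge u v

/-- `V⁰`: the set of non-root vertices, i.e. the vertices possessing a parent. -/
def Vcirc : Set V := {v | T.HasParent v}

/-- The tree is leafless if every vertex has a child. -/
def Leafless : Prop := ∀ u : V, (T.chi u).Nonempty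

/-- The parent of a vertex (junk value if the vertex is a root). -/
def par (v : V) : V := if h : T.HasParent v then h.choose else T.nonempty.some

/-- The set of descendants of a vertex. -/
def desc (u : V) : Set V := {w | Relation.ReflTransGen T.edge u w}

/-- The formal weighted shift map `Λ_T` acting on all complex functions on `V`. -/
def Lam (lam : V → ℂ) (f : V → ℂ) : V → ℂ :=
  fun v => if T.HasParent v then lam v * f (T.par v) else 0

/-- The domain of the weighted shift `S_λ`. -/
def domain (lam : V → ℂ) : Set (lp (fun _ : V => ℂ) 2) :=
  {f | Memℓp (T.Lam lam ⇑f) 2}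

/-- The weighted shift `S_λ` (extended by `0` outside its domain). -/
def shift (lam : V → ℂ) (f : lp (fun _ : V => ℂ) 2) : lp (fun _ : V => ℂ) 2 :=
  if h : f ∈ T.domain lam then (⟨T.Lam lam ⇑f, h⟩ : lp (fun _ : V => ℂ) 2) else 0

/-- The domain of `S_λ²`. -/
def squareDomain (lam : V → ℂ) : Set (lp (fun _ : V => ℂ) 2) :=
  {f | f ∈ T.domain lam ∧ T.shift lam f ∈ T.domain lam}

/-- The domain of the adjoint `S_λ*`. -/
def adjDomain (lam : V → ℂ) : Set (lp (fun _ : V => ℂ) 2) :=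
  {g | ∃ h : lp (fun _ : V => ℂ) 2,
    ∀ f ∈ T.domain lam, (inner ℂ (T.shift lam f) g : ℂ) = inner ℂ f h}

/-- `S_λ` is hyponormal: it is densely defined, `D(S_λ) ⊆ D(S_λ*)` and
`‖S_λ* f‖ ≤ ‖S_λ f‖` for every `f ∈ D(S_λ)` (the adjoint value at `f` being any vector
`h` satisfying `⟪S_λ g, f⟫ = ⟪g, h⟫` for all `g ∈ D(S_λ)`; it is unique by density). -/
def IsHyponormal (lam : V → ℂ) : Prop :=
  Dense (T.domain lam) ∧ T.domain lam ⊆ T.adjDomain lam ∧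
    ∀ f ∈ T.domain lam, ∀ h : lp (fun _ : V => ℂ) 2,
      (∀ g ∈ T.domain lam, (inner ℂ (T.shift lam g) f : ℂ) = inner ℂ g h) →
        ‖h‖ ≤ ‖T.shift lam f‖

/-- `ζ_u = (Σ_{v ∈ Chi(u)} |λ_v|²)^{1/2} ∈ [0,∞]`. -/
def zeta (lam : V → ℂ) (u : V) : ℝ≥0∞ :=
  (∑' v : T.chi u, ((‖lam (v : V)‖₊ : ℝ≥0∞)) ^ 2) ^ (1/2 : ℝ)

end DirectedTree

/-!
Every vertex `u` has countably many children: density gives some `f ∈ D(S_λ)` with `f u ≠ 0`,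
and then `(S_λ f)(v) = λ_v f(u) ≠ 0` for every child `v` of `u`, while an `ℓ²` function has
countable support. Together with the at most one parent, every vertex of the underlying
undirected graph has countably many neighbours, and a connected graph with this property is
countable, being the union over `n` of the vertices reachable in `n` steps from a fixed one.
-/

theorem Memℓp.countable_setOf_ne_zero {α : Type*} {E : α → Type*}
    [∀ i, NormedAddCommGroup (E i)] {p : ℝ≥0∞} (hp : 0 < p.toReal) {f : ∀ i, E i}
    (hf : Memℓp f p) : {i | f i ≠ 0}.Countable := by
  simpa [Function.support, Real.rpow_eq_zero (norm_nonneg _) hp.ne'] using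
    (hf.summable hp).countable_support

theorem Dense.exists_mem_lp_apply_ne_zero {α : Type*} {E : α → Type*}
    [∀ i, NormedAddCommGroup (E i)] {p : ℝ≥0∞} [Fact (1 ≤ p)] {s : Set (lp E p)}
    (hs : Dense s) (i : α) [Nontrivial (E i)] : ∃ f ∈ s, f i ≠ 0 := by
  have hopen : IsOpen {f : lp E p | f i ≠ 0} :=
    isOpen_ne.preimage (lp.lipschitzWith_one_eval p i).continuous
  obtain ⟨a, ha⟩ := exists_ne (0 : E i)
  obtain ⟨f, hf, hfs⟩ := hs.inter_open_nonempty _ hopen ⟨lp.single p i a, by simpa using ha⟩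
  exact ⟨f, hfs, hf⟩

theorem Relation.countable_setOf_reflTransGen {α : Type*} {r : α → α → Prop}
    (hr : ∀ a, {b | r a b}.Countable) (a : α) : {b | ReflTransGen r a b}.Countable := by
  let step : Set α → Set α := fun s => ⋃ x ∈ s, {y | r x y}
  have hcount : ∀ n, (step^[n] {a}).Countable := by
    intro n
    induction n with
    | zero => exact Set.countable_singleton a
    | succ n ih =>
      rw [Function.iterate_succ_apply']
      exact ih.biUnion fun x _ => hr x
  refine (Set.countable_iUnion hcount).mono fun b hb => ?_
  induction hb with
  | refl => exact Set.mem_iUnion.2 ⟨0, rfl⟩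
  | tail _ hbc ih =>
    obtain ⟨n, hn⟩ := Set.mem_iUnion.1 ih
    refine Set.mem_iUnion.2 ⟨n + 1, ?_⟩
    rw [Function.iterate_succ_apply']
    exact Set.mem_biUnion hn hbc

theorem SimpleGraph.Connected.countable_of_countable_neighborSet {V : Type*}
    {G : SimpleGraph V} (hG : G.Connected) (h : ∀ v, (G.neighborSet v).Countable) :
    Countable V := by
  obtain ⟨v₀⟩ := hG.nonempty
  refine Set.countable_univ_iff.1 ((Relation.countable_setOf_reflTransGen h v₀).mono ?_)
  exact fun v _ => (reachable_iff_reflTransGen v₀ v).1 (hG v₀ v)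

namespace DirectedTree

variable {V : Type} (T : DirectedTree V)

theorem par_eq_of_edge {u v : V} (h : T.edge u v) : T.par v = u := by
  have hv : T.HasParent v := ⟨u, h⟩
  rw [par, dif_pos hv]
  exact T.parent_unique _ _ _ hv.choose_spec h

theorem Lam_apply_of_edge (lam f : V → ℂ) {u v : V} (h : T.edge u v) :
    T.Lam lam f v = lam v * f u := by
  rw [Lam, if_pos ⟨u, h⟩, T.par_eq_of_edge h]

theorem countable_chi_of_mem_domain {lam : V → ℂ} {f : lp (fun _ : V => ℂ) 2}
    (hf : f ∈ T.domain lam) {u : V} (hfu : f u ≠ 0) (hlam : ∀ v ∈ T.chi u, lam v ≠ 0) :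
    (T.chi u).Countable :=
  (Memℓp.countable_setOf_ne_zero (by norm_num) hf).mono fun v hv => by
    rw [Set.mem_ofPred_eq, T.Lam_apply_of_edge lam f hv]
    exact mul_ne_zero (hlam v hv) hfu

theorem countable_neighborSet_fromRel (hchi : ∀ u, (T.chi u).Countable) (u : V) :
    ((SimpleGraph.fromRel T.edge).neighborSet u).Countable := by
  have hparents : {v | T.edge v u}.Countable :=
    Set.Subsingleton.countable fun a ha b hb => T.parent_unique a b u ha hb
  exact ((hchi u).union hparents).mono fun v ⟨_, hv⟩ => hv

end DirectedTree

/-- Proposition 2.1(iv): if `D(S_λ)` is dense and all weights are nonzero,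
then `V` is at most countable. -/
theorem stmt3 {V : Type} (T : DirectedTree V) (lam : V → ℂ)
    (hdense : Dense (T.domain lam)) (hnz : ∀ v ∈ T.Vcirc, lam v ≠ 0) :
    Countable V := by
  have hchi : ∀ u, (T.chi u).Countable := fun u => by
    obtain ⟨f, hf, hfu⟩ := hdense.exists_mem_lp_apply_ne_zero u
    exact T.countable_chi_of_mem_domain hf hfu fun v hv => hnz v ⟨u, hv⟩
  exact T.isTree.connected.countable_of_countable_neighborSet
    (T.countable_neighborSet_fromRel hchi)
end
end

section
/- Let T be a directed tree such that the set Chi(u) of children of u is countably infinite for every u ∈ V, let λ = {λ_v}_{v∈V°} be a family of nonzero complex numbers such that the weighted shift S_λ is densely defined and D(S_λ²) = {0}, and fix v₀ ∈ V°. Define λ̃ = {λ̃_v}_{v∈V°} by λ̃_v = λ_v for v ≠ v₀ and λ̃_{v₀} = (1 + ‖S_λ e_{v₀}‖²)^{1/2}. Then the weighted shift S_λ̃ is densely defined, D(S_λ̃) = D(S_λ), D(S_λ̃*) = D(S_λ*), S_λ̃ is not hyponormal, and D(S_λ̃²) = {0}. -/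
open scoped ENNReal NNReal Classical

noncomputable section

/-
Changing the weight at the single vertex `v₀` perturbs `S_λ` by the bounded rank-one operator
`f ↦ (λ̃_{v₀} - λ_{v₀}) f(par v₀) e_{v₀}`, so it changes neither `D(S_λ)` nor `D(S_λ*)`. Density
of `D(S_λ)` forces every `e_u` into `D(S_λ)`, hence the perturbation also preserves `D(S_λ²)`.
Hyponormality fails at `e_{v₀}`: `S_λ̃* e_{v₀} = conj λ̃_{v₀} e_{par v₀}` has norm
`(1 + ‖S_λ e_{v₀}‖²)^{1/2}`, whereas `S_λ̃ e_{v₀} = S_λ e_{v₀}` because `v₀` is not its own child.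
-/

open scoped ComplexConjugate

namespace DirectedTree

variable {V : Type} (T : DirectedTree V)

lemma edge_par {v : V} (hv : T.HasParent v) : T.edge (T.par v) v := by
  rw [par, dif_pos hv]
  exact hv.choose_spec

lemma par_ne_self {v : V} (hv : T.HasParent v) : T.par v ≠ v := fun h => by
  have hloop := T.edge_par hv
  rw [h] at hloop
  exact T.antisymm v v hloop hloop

lemma coe_shift {lam : V → ℂ} {f : lp (fun _ : V => ℂ) 2} (hf : f ∈ T.domain lam) :
    ⇑(T.shift lam f) = T.Lam lam ⇑f := by
  rw [shift, dif_pos hf]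

lemma Lam_sub (lam f g : V → ℂ) : T.Lam lam (f - g) = T.Lam lam f - T.Lam lam g := by
  funext v
  simp only [Lam, Pi.sub_apply]
  split_ifs <;> ring

lemma Lam_smul (lam : V → ℂ) (c : ℂ) (f : V → ℂ) : T.Lam lam (c • f) = c • T.Lam lam f := by
  funext v
  simp only [Lam, Pi.smul_apply, smul_eq_mul]
  split_ifs <;> ring

lemma sub_mem_domain {lam : V → ℂ} {f g : lp (fun _ : V => ℂ) 2}
    (hf : f ∈ T.domain lam) (hg : g ∈ T.domain lam) : f - g ∈ T.domain lam := by
  change Memℓp (T.Lam lam ⇑(f - g)) 2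
  rw [lp.coeFn_sub, Lam_sub]
  exact hf.sub hg

lemma smul_mem_domain {lam : V → ℂ} (c : ℂ) {f : lp (fun _ : V => ℂ) 2}
    (hf : f ∈ T.domain lam) : c • f ∈ T.domain lam := by
  change Memℓp (T.Lam lam ⇑(c • f)) 2
  rw [lp.coeFn_smul, Lam_smul]
  exact hf.const_smul c

lemma exists_mem_domain_apply_ne_zero {lam : V → ℂ} (hdense : Dense (T.domain lam)) (u : V) :
    ∃ f ∈ T.domain lam, f u ≠ 0 := by
  by_contra! hzero
  have hclosed : IsClosed {f : lp (fun _ : V => ℂ) 2 | f u = 0} :=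
    isClosed_eq (lp.lipschitzWith_one_eval 2 u).continuous continuous_const
  have hsingle : lp.single 2 u (1 : ℂ) ∈ {f : lp (fun _ : V => ℂ) 2 | f u = 0} :=
    closure_minimal hzero hclosed (hdense _)
  simp at hsingle

/-- `S_λ e_u` is supported on `Chi(u)`, where it is a multiple of `S_λ f` for any `f` with
`f u ≠ 0`. -/
lemma single_mem_domain_of_apply_ne_zero {lam : V → ℂ} {f : lp (fun _ : V => ℂ) 2}
    (hf : f ∈ T.domain lam) {u : V} (hfu : f u ≠ 0) :
    lp.single 2 u (1 : ℂ) ∈ T.domain lam := by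
  refine (hf.const_smul (f u)⁻¹).mono' fun v => ?_
  simp only [Lam, lp.coeFn_single, Pi.smul_apply, smul_eq_mul]
  split_ifs with hv
  · by_cases hpar : T.par v = u
    · simp only [hpar, Pi.single_eq_same, mul_one, norm_mul, norm_inv]
      rw [mul_left_comm, inv_mul_cancel₀ (norm_ne_zero_iff.2 hfu), mul_one]
    · simp only [hpar, Pi.single_apply, if_false, mul_zero, norm_zero]
      positivity
  · simp

lemma single_mem_domain {lam : V → ℂ} (hdense : Dense (T.domain lam)) (u : V) (a : ℂ) :
    lp.single 2 u a ∈ T.domain lam := by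
  obtain ⟨f, hf, hfu⟩ := T.exists_mem_domain_apply_ne_zero hdense u
  simpa [← lp.single_smul] using
    T.smul_mem_domain a (T.single_mem_domain_of_apply_ne_zero hf hfu)

lemma inner_shift_single {lam : V → ℂ} {u : V} (hu : T.HasParent u)
    {g : lp (fun _ : V => ℂ) 2} (hg : g ∈ T.domain lam) :
    inner ℂ (T.shift lam g) (lp.single 2 u (1 : ℂ)) =
      inner ℂ g (lp.single 2 (T.par u) (conj (lam u))) := by
  rw [lp.inner_single_right, lp.inner_single_right, coe_shift T hg]
  simp only [Lam, if_pos hu, RCLike.inner_apply, map_mul, one_mul]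

lemma not_isHyponormal_of_norm_shift_single_lt {lam : V → ℂ} {u : V} (hu : T.HasParent u)
    (hsingle : lp.single 2 u (1 : ℂ) ∈ T.domain lam)
    (hlt : ‖T.shift lam (lp.single 2 u (1 : ℂ))‖ < ‖lam u‖) :
    ¬ T.IsHyponormal lam := by
  rintro ⟨-, -, hnorm⟩
  have hle := hnorm _ hsingle _ fun g hg => T.inner_shift_single hu hg
  rw [lp.norm_single (by norm_num), RCLike.norm_conj] at hle
  exact hle.not_gt hlt

section OneWeight

variable {T} {lam lam' : V → ℂ} {v₀ : V}

lemma Lam_eq_add_of_forall_ne (hv₀ : T.HasParent v₀) (he : ∀ v ≠ v₀, lam' v = lam v)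
    (f : V → ℂ) :
    T.Lam lam' f = T.Lam lam f + ⇑(lp.single 2 v₀ ((lam' v₀ - lam v₀) * f (T.par v₀))) := by
  funext v
  by_cases hv : v = v₀
  · subst hv
    simp only [Lam, if_pos hv₀, Pi.add_apply, lp.single_apply_self]
    ring
  · simp [Lam, he v hv, hv]

lemma domain_subset_of_forall_ne (hv₀ : T.HasParent v₀) (he : ∀ v ≠ v₀, lam' v = lam v) :
    T.domain lam ⊆ T.domain lam' := fun f hf => by
  change Memℓp (T.Lam lam' ⇑f) 2
  rw [Lam_eq_add_of_forall_ne hv₀ he]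
  exact hf.add (lp.single 2 v₀ _).prop

lemma domain_eq_of_forall_ne (hv₀ : T.HasParent v₀) (he : ∀ v ≠ v₀, lam' v = lam v) :
    T.domain lam' = T.domain lam :=
  (domain_subset_of_forall_ne hv₀ fun v hv => (he v hv).symm).antisymm
    (domain_subset_of_forall_ne hv₀ he)

lemma shift_eq_add_of_forall_ne (hv₀ : T.HasParent v₀) (he : ∀ v ≠ v₀, lam' v = lam v)
    {f : lp (fun _ : V => ℂ) 2} (hf : f ∈ T.domain lam) :
    T.shift lam' f = T.shift lam f + lp.single 2 v₀ ((lam' v₀ - lam v₀) * f (T.par v₀)) := by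
  ext1
  rw [lp.coeFn_add, coe_shift T (domain_subset_of_forall_ne hv₀ he hf), coe_shift T hf,
    Lam_eq_add_of_forall_ne hv₀ he]

lemma shift_single_eq_of_forall_ne (hv₀ : T.HasParent v₀) (he : ∀ v ≠ v₀, lam' v = lam v)
    (hsingle : lp.single 2 v₀ (1 : ℂ) ∈ T.domain lam) :
    T.shift lam' (lp.single 2 v₀ 1) = T.shift lam (lp.single 2 v₀ 1) := by
  rw [shift_eq_add_of_forall_ne hv₀ he hsingle, lp.single_apply_ne _ _ _ (T.par_ne_self hv₀),
    mul_zero, lp.single_zero, add_zero]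

lemma adjDomain_subset_of_forall_ne (hv₀ : T.HasParent v₀) (he : ∀ v ≠ v₀, lam' v = lam v) :
    T.adjDomain lam ⊆ T.adjDomain lam' := by
  rintro g ⟨h, hh⟩
  refine ⟨h + lp.single 2 (T.par v₀) (conj (lam' v₀ - lam v₀) * g v₀), fun f hf => ?_⟩
  have hf' : f ∈ T.domain lam := domain_eq_of_forall_ne hv₀ he ▸ hf
  rw [shift_eq_add_of_forall_ne hv₀ he hf', inner_add_left, inner_add_right, hh f hf',
    lp.inner_single_left, lp.inner_single_right]
  simp only [RCLike.inner_apply, map_mul]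
  ring

lemma adjDomain_eq_of_forall_ne (hv₀ : T.HasParent v₀) (he : ∀ v ≠ v₀, lam' v = lam v) :
    T.adjDomain lam' = T.adjDomain lam :=
  (adjDomain_subset_of_forall_ne hv₀ fun v hv => (he v hv).symm).antisymm
    (adjDomain_subset_of_forall_ne hv₀ he)

lemma squareDomain_subset_of_forall_ne (hv₀ : T.HasParent v₀) (he : ∀ v ≠ v₀, lam' v = lam v)
    (hsingle : ∀ a : ℂ, lp.single 2 v₀ a ∈ T.domain lam) :
    T.squareDomain lam' ⊆ T.squareDomain lam := by
  rintro f ⟨hf, hsf⟩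
  rw [domain_eq_of_forall_ne hv₀ he] at hf hsf
  refine ⟨hf, ?_⟩
  rw [eq_sub_of_add_eq (shift_eq_add_of_forall_ne hv₀ he hf).symm]
  exact T.sub_mem_domain hsf (hsingle _)

lemma squareDomain_eq_of_forall_ne (hv₀ : T.HasParent v₀) (he : ∀ v ≠ v₀, lam' v = lam v)
    (hsingle : ∀ a : ℂ, lp.single 2 v₀ a ∈ T.domain lam) :
    T.squareDomain lam' = T.squareDomain lam :=
  (squareDomain_subset_of_forall_ne hv₀ he hsingle).antisymm
    (squareDomain_subset_of_forall_ne hv₀ (fun v hv => (he v hv).symm)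
      (domain_eq_of_forall_ne hv₀ he ▸ hsingle))

end OneWeight

end DirectedTree

theorem stmt19_general {V : Type} (T : DirectedTree V)
    (lam : V → ℂ)
    (hdense : Dense (T.domain lam))
    (hsq : T.squareDomain lam = ({0} : Set (lp (fun _ : V => ℂ) 2)))
    (v₀ : V) (hv₀ : v₀ ∈ T.Vcirc)
    (lamT : V → ℂ)
    (hlamT : ∀ v : V, lamT v =
      if v = v₀ then
        ((Real.sqrt (1 + ‖T.shift lam (lp.single 2 v₀ (1:ℂ))‖ ^ 2) : ℝ) : ℂ)
      else lam v) :
    Dense (T.domain lamT) ∧ T.domain lamT = T.domain lam ∧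
      T.adjDomain lamT = T.adjDomain lam ∧ ¬ T.IsHyponormal lamT ∧
      T.squareDomain lamT = ({0} : Set (lp (fun _ : V => ℂ) 2)) := by
  have he : ∀ v ≠ v₀, lamT v = lam v := fun v hv => by rw [hlamT v, if_neg hv]
  have hdom := DirectedTree.domain_eq_of_forall_ne hv₀ he
  have hsingle := T.single_mem_domain hdense v₀
  refine ⟨hdom ▸ hdense, hdom, DirectedTree.adjDomain_eq_of_forall_ne hv₀ he, ?_,
    (DirectedTree.squareDomain_eq_of_forall_ne hv₀ he hsingle).trans hsq⟩
  refine T.not_isHyponormal_of_norm_shift_single_lt hv₀ (hdom ▸ hsingle 1) ?_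
  rw [DirectedTree.shift_single_eq_of_forall_ne hv₀ he (hsingle 1), hlamT v₀, if_pos rfl,
    Complex.norm_real, Real.norm_of_nonneg (Real.sqrt_nonneg _),
    Real.lt_sqrt (norm_nonneg _)]
  linarith

/-- Remark 4.4: modifying one weight of a densely defined `S_λ` with trivial square
domain as indicated yields a non-hyponormal, densely defined weighted shift `S_λ̃`
with `D(S_λ̃) = D(S_λ)`, `D(S_λ̃*) = D(S_λ*)` and `D(S_λ̃²) = {0}`. -/
theorem stmt19 {V : Type} (T : DirectedTree V)
    (h : ∀ u : V, (T.chi u).Countable ∧ (T.chi u).Infinite)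
    (lam : V → ℂ) (hnz : ∀ v ∈ T.Vcirc, lam v ≠ 0)
    (hdense : Dense (T.domain lam))
    (hsq : T.squareDomain lam = ({0} : Set (lp (fun _ : V => ℂ) 2)))
    (v₀ : V) (hv₀ : v₀ ∈ T.Vcirc)
    (lamT : V → ℂ)
    (hlamT : ∀ v : V, lamT v =
      if v = v₀ then
        ((Real.sqrt (1 + ‖T.shift lam (lp.single 2 v₀ (1:ℂ))‖ ^ 2) : ℝ) : ℂ)
      else lam v) :
    Dense (T.domain lamT) ∧ T.domain lamT = T.domain lam ∧
      T.adjDomain lamT = T.adjDomain lam ∧ ¬ T.IsHyponormal lamT ∧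
      T.squareDomain lamT = ({0} : Set (lp (fun _ : V => ℂ) 2)) :=
  stmt19_general T lam hdense hsq v₀ hv₀ lamT hlamT
end
end
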